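/- Let G be a connected pseudograph with loops and let G_m be its loop-free version, obtained by replacing the set of loops at each node v by a bundle of edges between v and a new ghost node v'. Then the map φ replacing each loop in a tube by its associated edge is an injective poset map from tubings of G to tubings of G_m, and a tubing of G_m is in the image of φ if and only if it contains no singleton tube at a ghost node. -/

import Mathlib

/-!
Let `ψ` forget the ghost nodes of a piece of `G_m`. Then `ψ ∘ φ = id`, and `φ ∘ ψ = id` on tubes of
`G_m` other than ghost singletons, because a ghost node in such a tube can only be reached through
one of its ghost edges, that is, through a loop of `ψ K`. Collapsing each ghost `v'` onto `v` sends
the endpoints of every edge in `G_m` to its endpoints in `G`. Hence `φ H` is edge-closed, connected, proper and saturated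
exactly when `H` is, and `φ` preserves and reflects nesting, disjointness and adjacency of tubes.
For a connected graph the component condition of a tubing is automatic, because no tube is the whole
graph. So `φ '' 𝒯` is a tubing exactly when `𝒯` is, and the theorem follows.
-/

/-- A pseudograph: finite-or-infinite multigraph with loops allowed,
    given by an endpoint map from edges to unordered pairs of vertices. -/
structure Pseudograph (V E : Type) where
  ends : E → Sym2 V

/-- A (not necessarily well-formed) subgraph datum: a set of vertices and a set of edges. -/
structure Piece (V E : Type) where
  verts : Set V
  edges : Set E

/-- Containment of subgraph data. -/
def Piece.Sub {V E : Type} (H K : Piece V E) : Prop :=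
  H.verts ⊆ K.verts ∧ H.edges ⊆ K.edges

namespace Pseudograph

variable {V E : Type}

/-- The whole graph, as a piece. -/
def wholePiece : Piece V E := ⟨Set.univ, Set.univ⟩

/-- Adjacency using only edges of the piece `H`. -/
def adjIn (G : Pseudograph V E) (H : Piece V E) (u w : V) : Prop :=
  ∃ e ∈ H.edges, G.ends e = s(u, w)

/-- The piece `H` is connected: nonempty vertex set, all vertices joined by walks in `H`. -/
def ConnectedPiece (G : Pseudograph V E) (H : Piece V E) : Prop :=
  H.verts.Nonempty ∧
    ∀ u ∈ H.verts, ∀ w ∈ H.verts, Relation.ReflTransGen (G.adjIn H) u w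

/-- A tube: a proper connected subgraph containing at least one edge between
    every pair of its nodes whenever `G` has such an edge. -/
def IsTube (G : Pseudograph V E) (H : Piece V E) : Prop :=
  (∀ e ∈ H.edges, ∀ v, v ∈ G.ends e → v ∈ H.verts) ∧
  G.ConnectedPiece H ∧
  H ≠ wholePiece ∧
  (∀ u ∈ H.verts, ∀ w ∈ H.verts, u ≠ w → (∃ e, G.ends e = s(u, w)) →
    ∃ e ∈ H.edges, G.ends e = s(u, w))

/-- Compatibility of tubes: one properly contains the other, or they are disjoint
    and cannot be connected by a single edge of `G`. -/
def Compatible (G : Pseudograph V E) (H K : Piece V E) : Prop :=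
  (H.Sub K ∧ H ≠ K) ∨ (K.Sub H ∧ K ≠ H) ∨
  (Disjoint H.verts K.verts ∧
    ¬ ∃ e, ∃ u ∈ H.verts, ∃ w ∈ K.verts, G.ends e = s(u, w))

/-- Adjacency in the whole graph. -/
def adj (G : Pseudograph V E) (u w : V) : Prop := ∃ e, G.ends e = s(u, w)

/-- The connected component of `v`, as a piece. -/
def compPiece (G : Pseudograph V E) (v : V) : Piece V E :=
  ⟨{u | Relation.ReflTransGen G.adj v u},
   {e | ∀ u, u ∈ G.ends e → Relation.ReflTransGen G.adj v u}⟩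

/-- A tubing: a set of pairwise compatible tubes not containing all component tubes. -/
def IsTubing (G : Pseudograph V E) (𝒯 : Set (Piece V E)) : Prop :=
  (∀ H ∈ 𝒯, G.IsTube H) ∧
  (∀ H ∈ 𝒯, ∀ K ∈ 𝒯, H ≠ K → G.Compatible H K) ∧
  ¬ ∀ v : V, G.compPiece v ∈ 𝒯

/-- The poset of tubings of `G`, ordered by reverse inclusion. -/
def Tubing (G : Pseudograph V E) := {𝒯 : Set (Piece V E) // G.IsTubing 𝒯}

instance (G : Pseudograph V E) : PartialOrder (G.Tubing) where
  le T T' := T'.1 ⊆ T.1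
  le_refl T := subset_rfl
  le_trans T₁ T₂ T₃ h h' := fun x hx => h (h' hx)
  le_antisymm T₁ T₂ h h' := Subtype.ext (subset_antisymm h' h)

end Pseudograph

namespace Pseudograph

variable {V E : Type}


/-- `G` is a connected pseudograph. -/
def ConnectedGraph (G : Pseudograph V E) : Prop :=
  Nonempty V ∧ ∀ u w : V, Relation.ReflTransGen G.adj u w

/-- `G` has a loop at `v`. -/
def IsLoopAt (G : Pseudograph V E) (v : V) : Prop := ∃ e, G.ends e = s(v, v)

open scoped Classical in
/-- The loop-free version `G_m` of `G`: each node `v` with loops gets a ghost node `v'`,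
and each loop at `v` becomes an edge between `v` and `v'`. -/
noncomputable def loopFree (G : Pseudograph V E) :
    Pseudograph (V ⊕ {v : V // G.IsLoopAt v}) E :=
  ⟨fun e =>
    if h : ∃ v, G.ends e = s(v, v)
    then s(Sum.inl h.choose, Sum.inr ⟨h.choose, ⟨e, h.choose_spec⟩⟩)
    else (G.ends e).map Sum.inl⟩

/-- The singleton tube at a ghost node. -/
def ghostPiece (G : Pseudograph V E) (v : {v : V // G.IsLoopAt v}) :
    Piece (V ⊕ {v : V // G.IsLoopAt v}) E :=
  ⟨{Sum.inr v}, ∅⟩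

/-- The map `φ` on tubes: loops are replaced by their associated ghost edges, and the
ghost node is added whenever some loop at its node belongs to the tube. -/
def phiPiece (G : Pseudograph V E) (H : Piece V E) :
    Piece (V ⊕ {v : V // G.IsLoopAt v}) E :=
  ⟨Sum.inl '' H.verts ∪
     {w | ∃ v, ∃ h : G.IsLoopAt v, w = Sum.inr ⟨v, h⟩ ∧ ∃ e ∈ H.edges, G.ends e = s(v, v)},
   H.edges⟩


theorem _root_.Piece.ext {H K : Piece V E} (hv : H.verts = K.verts) (he : H.edges = K.edges) :
    H = K := by
  cases H; cases K; congr

instance (G : Pseudograph V E) (H : Piece V E) : Std.Symm (G.adjIn H) where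
  symm _ _ := fun ⟨e, he, h⟩ => ⟨e, he, h.trans Sym2.eq_swap⟩

theorem adjIn_wholePiece (G : Pseudograph V E) : G.adjIn wholePiece = G.adj := by
  ext u w
  simp [adjIn, adj, wholePiece]

def EdgeClosed (G : Pseudograph V E) (H : Piece V E) : Prop :=
  ∀ e ∈ H.edges, ∀ v, v ∈ G.ends e → v ∈ H.verts

def Saturated (G : Pseudograph V E) (H : Piece V E) : Prop :=
  ∀ u ∈ H.verts, ∀ w ∈ H.verts, u ≠ w → (∃ e, G.ends e = s(u, w)) →
    ∃ e ∈ H.edges, G.ends e = s(u, w)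

def EdgeBetween (G : Pseudograph V E) (H K : Piece V E) : Prop :=
  ∃ e, ∃ u ∈ H.verts, ∃ w ∈ K.verts, G.ends e = s(u, w)

theorem isTube_iff {G : Pseudograph V E} {H : Piece V E} :
    G.IsTube H ↔ G.EdgeClosed H ∧ G.ConnectedPiece H ∧ H ≠ wholePiece ∧ G.Saturated H :=
  Iff.rfl

theorem compatible_iff {G : Pseudograph V E} {H K : Piece V E} :
    G.Compatible H K ↔
      (H.Sub K ∧ H ≠ K) ∨ (K.Sub H ∧ K ≠ H) ∨ (Disjoint H.verts K.verts ∧ ¬ G.EdgeBetween H K) :=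
  Iff.rfl

theorem edgeClosed_wholePiece (G : Pseudograph V E) : G.EdgeClosed wholePiece :=
  fun _ _ _ _ => trivial

theorem connectedGraph_iff_connectedPiece_wholePiece {G : Pseudograph V E} :
    G.ConnectedGraph ↔ G.ConnectedPiece wholePiece := by
  rw [ConnectedGraph, ConnectedPiece, adjIn_wholePiece]
  simp [wholePiece, Set.nonempty_iff_univ_nonempty]

namespace ConnectedGraph

variable {G : Pseudograph V E}

theorem compPiece_eq (hG : G.ConnectedGraph) (v : V) : G.compPiece v = wholePiece :=
  Piece.ext (Set.eq_univ_of_forall fun u => hG.2 v u)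
    (Set.eq_univ_of_forall fun _ u _ => hG.2 v u)

theorem isTubing_iff (hG : G.ConnectedGraph) {𝒯 : Set (Piece V E)} :
    G.IsTubing 𝒯 ↔ (∀ H ∈ 𝒯, G.IsTube H) ∧ ∀ H ∈ 𝒯, ∀ K ∈ 𝒯, H ≠ K → G.Compatible H K := by
  refine ⟨fun h => ⟨h.1, h.2.1⟩, fun ⟨hT, hC⟩ => ⟨hT, hC, fun hall => ?_⟩⟩
  obtain ⟨v⟩ := hG.1
  exact (hT _ (hall v)).2.2.1 (hG.compPiece_eq v)

end ConnectedGraph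

def collapse (G : Pseudograph V E) : V ⊕ {v : V // G.IsLoopAt v} → V :=
  Sum.elim id Subtype.val

@[simp]
theorem collapse_inl (G : Pseudograph V E) (v : V) : G.collapse (Sum.inl v) = v := rfl

def psiPiece (G : Pseudograph V E) (K : Piece (V ⊕ {v : V // G.IsLoopAt v}) E) : Piece V E :=
  ⟨Sum.inl ⁻¹' K.verts, K.edges⟩

section LoopFree

variable {G : Pseudograph V E} {e e' : E} {u v w : V} {g : {v : V // G.IsLoopAt v}}

theorem loopFree_ends_of_loop (h : G.ends e = s(v, v)) :
    G.loopFree.ends e = s(Sum.inl v, Sum.inr ⟨v, e, h⟩) := by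
  have hex : ∃ v, G.ends e = s(v, v) := ⟨v, h⟩
  have hv : hex.choose = v := Sym2.diag_injective (hex.choose_spec.symm.trans h)
  simp [loopFree, dif_pos hex, hv]

theorem loopFree_ends_of_not_loop (h : ¬ ∃ v, G.ends e = s(v, v)) :
    G.loopFree.ends e = (G.ends e).map Sum.inl := by
  simp only [loopFree]
  rw [dif_neg h]

theorem loopFree_ends_of_ne (h : G.ends e = s(u, w)) (huw : u ≠ w) :
    G.loopFree.ends e = s(Sum.inl u, Sum.inl w) := by
  have hnl : ¬ ∃ v, G.ends e = s(v, v) := by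
    rintro ⟨v, hv⟩
    obtain ⟨rfl, rfl⟩ | ⟨rfl, rfl⟩ := Sym2.eq_iff.1 (hv.symm.trans h) <;> exact huw rfl
  rw [loopFree_ends_of_not_loop hnl, h, Sym2.map_mk]

theorem loopFree_ends_congr (h : G.ends e = G.ends e') :
    G.loopFree.ends e = G.loopFree.ends e' := by
  by_cases hl : ∃ v, G.ends e = s(v, v)
  · obtain ⟨v, hv⟩ := hl
    rw [loopFree_ends_of_loop hv, loopFree_ends_of_loop (h ▸ hv)]
  · rw [loopFree_ends_of_not_loop hl, loopFree_ends_of_not_loop (h ▸ hl), h]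

theorem map_collapse_loopFree_ends (e : E) : (G.loopFree.ends e).map G.collapse = G.ends e := by
  by_cases hl : ∃ v, G.ends e = s(v, v)
  · obtain ⟨v, hv⟩ := hl
    rw [loopFree_ends_of_loop hv, hv, Sym2.map_mk]
    rfl
  · rw [loopFree_ends_of_not_loop hl, Sym2.map_map]
    exact congrFun Sym2.map_id _

theorem ends_eq_collapse_of_loopFree_ends_eq {x y : V ⊕ {v : V // G.IsLoopAt v}}
    (h : G.loopFree.ends e = s(x, y)) : G.ends e = s(G.collapse x, G.collapse y) := by
  rw [← map_collapse_loopFree_ends, h, Sym2.map_mk]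

@[simp]
theorem inl_mem_loopFree_ends : Sum.inl v ∈ G.loopFree.ends e ↔ v ∈ G.ends e := by
  by_cases hl : ∃ v, G.ends e = s(v, v)
  · obtain ⟨w, hw⟩ := hl
    simp [loopFree_ends_of_loop hw, hw]
  · simp [loopFree_ends_of_not_loop hl]

@[simp]
theorem inr_mem_loopFree_ends : Sum.inr g ∈ G.loopFree.ends e ↔ G.ends e = s(g.1, g.1) := by
  by_cases hl : ∃ v, G.ends e = s(v, v)
  · obtain ⟨w, hw⟩ := hl
    simp [loopFree_ends_of_loop hw, hw, Subtype.ext_iff, eq_comm]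
  · simp only [loopFree_ends_of_not_loop hl, Sym2.mem_map, reduceCtorEq, and_false,
      exists_false, false_iff]
    exact fun h => hl ⟨_, h⟩


@[simp]
theorem inl_mem_phiPiece {H : Piece V E} : Sum.inl v ∈ (G.phiPiece H).verts ↔ v ∈ H.verts := by
  simp [phiPiece]

@[simp]
theorem inr_mem_phiPiece {H : Piece V E} :
    Sum.inr g ∈ (G.phiPiece H).verts ↔ ∃ e ∈ H.edges, G.ends e = s(g.1, g.1) := by
  obtain ⟨v, hv⟩ := g
  simp [phiPiece, hv]

@[simp]
theorem phiPiece_edges (H : Piece V E) : (G.phiPiece H).edges = H.edges := rfl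

theorem psiPiece_phiPiece (H : Piece V E) : G.psiPiece (G.phiPiece H) = H :=
  Piece.ext (by ext; simp [psiPiece]) rfl

theorem phiPiece_injective : Function.Injective G.phiPiece :=
  Function.LeftInverse.injective psiPiece_phiPiece

theorem phiPiece_wholePiece : G.phiPiece wholePiece = wholePiece := by
  refine Piece.ext (Set.eq_univ_of_forall ?_) rfl
  rintro (v | ⟨v, e, he⟩)
  · simp [wholePiece]
  · exact inr_mem_phiPiece.2 ⟨e, trivial, he⟩

theorem phiPiece_eq_wholePiece_iff {H : Piece V E} : G.phiPiece H = wholePiece ↔ H = wholePiece :=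
  phiPiece_injective.eq_iff' phiPiece_wholePiece

theorem collapse_mem_of_mem_phiPiece {H : Piece V E} (hH : G.EdgeClosed H)
    {x : V ⊕ {v : V // G.IsLoopAt v}} (hx : x ∈ (G.phiPiece H).verts) :
    G.collapse x ∈ H.verts := by
  rcases x with v | g
  · exact inl_mem_phiPiece.1 hx
  · obtain ⟨e, he, hloop⟩ := inr_mem_phiPiece.1 hx
    exact hH e he g.1 (hloop ▸ Sym2.mem_mk_left _ _)

theorem edgeClosed_phiPiece_iff {H : Piece V E} :
    G.loopFree.EdgeClosed (G.phiPiece H) ↔ G.EdgeClosed H := by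
  refine ⟨fun h e he v hv => ?_, fun h e he x hx => ?_⟩
  · simpa using h e he (Sum.inl v) (inl_mem_loopFree_ends.2 hv)
  · rcases x with v | g
    · simpa using h e he v (inl_mem_loopFree_ends.1 hx)
    · exact inr_mem_phiPiece.2 ⟨e, he, inr_mem_loopFree_ends.1 hx⟩

theorem reflTransGen_phiPiece_inl {H : Piece V E} (h : Relation.ReflTransGen (G.adjIn H) u w) :
    Relation.ReflTransGen (G.loopFree.adjIn (G.phiPiece H)) (Sum.inl u) (Sum.inl w) := by
  refine h.lift' Sum.inl fun a b ⟨e, he, hab⟩ => ?_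
  rcases eq_or_ne a b with rfl | hne
  · exact .refl
  · exact .single ⟨e, he, loopFree_ends_of_ne hab hne⟩

theorem reflTransGen_psiPiece_collapse {K : Piece (V ⊕ {v : V // G.IsLoopAt v}) E}
    {x y : V ⊕ {v : V // G.IsLoopAt v}} (h : Relation.ReflTransGen (G.loopFree.adjIn K) x y) :
    Relation.ReflTransGen (G.adjIn (G.psiPiece K)) (G.collapse x) (G.collapse y) :=
  h.lift _ fun _ _ ⟨e, he, hab⟩ =>
    ⟨e, he, ends_eq_collapse_of_loopFree_ends_eq hab⟩

theorem reflTransGen_inl_collapse {H : Piece V E} {x : V ⊕ {v : V // G.IsLoopAt v}}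
    (hx : x ∈ (G.phiPiece H).verts) :
    Relation.ReflTransGen (G.loopFree.adjIn (G.phiPiece H)) x (Sum.inl (G.collapse x)) := by
  rcases x with v | ⟨v, hv⟩
  · exact .refl
  · obtain ⟨e, he, hloop⟩ := inr_mem_phiPiece.1 hx
    exact .single ⟨e, he, (loopFree_ends_of_loop hloop).trans Sym2.eq_swap⟩

theorem connectedPiece_phiPiece_iff {H : Piece V E} (hH : G.EdgeClosed H) :
    G.loopFree.ConnectedPiece (G.phiPiece H) ↔ G.ConnectedPiece H := by
  constructor
  · rintro ⟨⟨x, hx⟩, hconn⟩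
    refine ⟨⟨_, collapse_mem_of_mem_phiPiece hH hx⟩, fun u hu w hw => ?_⟩
    simpa [psiPiece_phiPiece] using
      reflTransGen_psiPiece_collapse (hconn _ (inl_mem_phiPiece.2 hu) _ (inl_mem_phiPiece.2 hw))
  · rintro ⟨⟨v, hv⟩, hconn⟩
    refine ⟨⟨_, inl_mem_phiPiece.2 hv⟩, fun x hx y hy => ?_⟩
    have hxy := reflTransGen_phiPiece_inl
      (hconn _ (collapse_mem_of_mem_phiPiece hH hx) _ (collapse_mem_of_mem_phiPiece hH hy))
    exact ((reflTransGen_inl_collapse hx).trans hxy).trans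
      (Std.Symm.symm _ _ (reflTransGen_inl_collapse hy))


theorem saturated_phiPiece_iff {H : Piece V E} :
    G.loopFree.Saturated (G.phiPiece H) ↔ G.Saturated H := by
  constructor
  · rintro h u hu w hw huw ⟨e, he⟩
    obtain ⟨e', he', hends⟩ := h _ (inl_mem_phiPiece.2 hu) _ (inl_mem_phiPiece.2 hw)
      (Sum.inl_injective.ne huw) ⟨e, loopFree_ends_of_ne he huw⟩
    exact ⟨e', he', ends_eq_collapse_of_loopFree_ends_eq hends⟩
  · rintro h x hx y hy hxy ⟨e, he⟩
    -- a ghost endpoint makes `e` a loop, parallel to the loop of `H` that put the ghost into `φ H`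
    have hghost : ∀ g, Sum.inr g ∈ (G.phiPiece H).verts → Sum.inr g ∈ G.loopFree.ends e →
        ∃ e' ∈ H.edges, G.loopFree.ends e' = s(x, y) := by
      intro g hg hge
      obtain ⟨e', he', hloop⟩ := inr_mem_phiPiece.1 hg
      exact ⟨e', he',
        (loopFree_ends_congr (hloop.trans (inr_mem_loopFree_ends.1 hge).symm)).trans he⟩
    rcases x with u | g
    · rcases y with w | g
      · have huw : u ≠ w := fun h => hxy (congrArg Sum.inl h)
        obtain ⟨e', he', hends⟩ := h u (inl_mem_phiPiece.1 hx) w (inl_mem_phiPiece.1 hy) huw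
          ⟨e, ends_eq_collapse_of_loopFree_ends_eq he⟩
        exact ⟨e', he', loopFree_ends_of_ne hends huw⟩
      · exact hghost g hy (he ▸ Sym2.mem_mk_right _ _)
    · exact hghost g hx (he ▸ Sym2.mem_mk_left _ _)

theorem isTube_phiPiece_iff {H : Piece V E} : G.loopFree.IsTube (G.phiPiece H) ↔ G.IsTube H := by
  rw [isTube_iff, isTube_iff, edgeClosed_phiPiece_iff, saturated_phiPiece_iff, Ne, Ne,
    phiPiece_eq_wholePiece_iff]
  exact and_congr_right fun hH => by rw [connectedPiece_phiPiece_iff hH]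

theorem phiPiece_sub_phiPiece_iff {H K : Piece V E} :
    (G.phiPiece H).Sub (G.phiPiece K) ↔ H.Sub K := by
  refine ⟨fun ⟨hv, he⟩ => ⟨fun v h => inl_mem_phiPiece.1 (hv (inl_mem_phiPiece.2 h)), he⟩,
    fun ⟨hv, he⟩ => ⟨?_, he⟩⟩
  rintro (v | g) h
  · exact inl_mem_phiPiece.2 (hv (inl_mem_phiPiece.1 h))
  · obtain ⟨e, he', hloop⟩ := inr_mem_phiPiece.1 h
    exact inr_mem_phiPiece.2 ⟨e, he he', hloop⟩

theorem disjoint_phiPiece_verts_iff {H K : Piece V E} (hH : G.EdgeClosed H)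
    (hK : G.EdgeClosed K) :
    Disjoint (G.phiPiece H).verts (G.phiPiece K).verts ↔ Disjoint H.verts K.verts := by
  simp only [Set.disjoint_left]
  exact ⟨fun h v hvH hvK => h (inl_mem_phiPiece.2 hvH) (inl_mem_phiPiece.2 hvK),
    fun h x hxH hxK =>
      h (collapse_mem_of_mem_phiPiece hH hxH) (collapse_mem_of_mem_phiPiece hK hxK)⟩

theorem edgeBetween_phiPiece_iff {H K : Piece V E} (hH : G.EdgeClosed H) (hK : G.EdgeClosed K)
    (hHK : Disjoint H.verts K.verts) :
    G.loopFree.EdgeBetween (G.phiPiece H) (G.phiPiece K) ↔ G.EdgeBetween H K := by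
  constructor
  · rintro ⟨e, x, hx, y, hy, he⟩
    exact ⟨e, _, collapse_mem_of_mem_phiPiece hH hx, _, collapse_mem_of_mem_phiPiece hK hy,
      ends_eq_collapse_of_loopFree_ends_eq he⟩
  · rintro ⟨e, u, hu, w, hw, he⟩
    have huw : u ≠ w := fun h => Set.disjoint_left.1 hHK hu (h ▸ hw)
    exact ⟨e, _, inl_mem_phiPiece.2 hu, _, inl_mem_phiPiece.2 hw, loopFree_ends_of_ne he huw⟩

theorem compatible_phiPiece_iff {H K : Piece V E} (hH : G.EdgeClosed H) (hK : G.EdgeClosed K) :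
    G.loopFree.Compatible (G.phiPiece H) (G.phiPiece K) ↔ G.Compatible H K := by
  rw [compatible_iff, compatible_iff, phiPiece_sub_phiPiece_iff, phiPiece_sub_phiPiece_iff,
    phiPiece_injective.ne_iff, phiPiece_injective.ne_iff, disjoint_phiPiece_verts_iff hH hK]
  refine or_congr_right (or_congr_right (and_congr_right fun hHK => ?_))
  rw [edgeBetween_phiPiece_iff hH hK hHK]

theorem exists_loop_of_inr_mem {K : Piece (V ⊕ {v : V // G.IsLoopAt v}) E}
    (hK : G.loopFree.IsTube K) (hKg : K ≠ G.ghostPiece g) (hg : Sum.inr g ∈ K.verts) :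
    ∃ e ∈ K.edges, G.ends e = s(g.1, g.1) := by
  suffices ∃ e ∈ K.edges, Sum.inr g ∈ G.loopFree.ends e by simpa using this
  by_contra! hno
  have hverts : K.verts = {Sum.inr g} := by
    refine Set.eq_singleton_iff_unique_mem.2 ⟨hg, fun x hx => ?_⟩
    by_contra hxg
    obtain ⟨c, ⟨e, he, hends⟩, -⟩ :=
      (hK.2.1.2 _ hg x hx).cases_head.resolve_left (Ne.symm hxg)
    exact hno e he (hends ▸ Sym2.mem_mk_left _ _)
  refine hKg (Piece.ext hverts (Set.eq_empty_of_forall_notMem fun e he => ?_))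
  have hout := hK.1 e he _ (Sym2.out_fst_mem _)
  rw [hverts, Set.mem_singleton_iff] at hout
  exact hno e he (hout ▸ Sym2.out_fst_mem _)

theorem phiPiece_psiPiece {K : Piece (V ⊕ {v : V // G.IsLoopAt v}) E}
    (hK : G.loopFree.IsTube K) (hKg : ∀ g, K ≠ G.ghostPiece g) :
    G.phiPiece (G.psiPiece K) = K := by
  refine Piece.ext (Set.ext ?_) rfl
  rintro (v | g)
  · exact inl_mem_phiPiece
  · rw [inr_mem_phiPiece]
    exact ⟨fun ⟨e, he, hloop⟩ => hK.1 e he _ (inr_mem_loopFree_ends.2 hloop),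
      exists_loop_of_inr_mem hK (hKg g)⟩

theorem phiPiece_ne_ghostPiece {H : Piece V E} (hH : H.verts.Nonempty) :
    G.phiPiece H ≠ G.ghostPiece g := by
  obtain ⟨v, hv⟩ := hH
  intro h
  have hmem : Sum.inl v ∈ (G.ghostPiece g).verts := h ▸ inl_mem_phiPiece.2 hv
  simp [ghostPiece] at hmem

end LoopFree

theorem ConnectedGraph.loopFree {G : Pseudograph V E} (hG : G.ConnectedGraph) :
    G.loopFree.ConnectedGraph := by
  rw [connectedGraph_iff_connectedPiece_wholePiece] at hG ⊢
  rw [← phiPiece_wholePiece]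
  exact (connectedPiece_phiPiece_iff (edgeClosed_wholePiece G)).2 hG

theorem isTubing_image_phiPiece_iff {G : Pseudograph V E} (hG : G.ConnectedGraph)
    {𝒯 : Set (Piece V E)} : G.loopFree.IsTubing (G.phiPiece '' 𝒯) ↔ G.IsTubing 𝒯 := by
  simp only [hG.isTubing_iff, hG.loopFree.isTubing_iff, Set.forall_mem_image, isTube_phiPiece_iff,
    phiPiece_injective.ne_iff]
  refine and_congr_right fun hT => forall₂_congr fun H hH => forall₂_congr fun K hK => ?_
  rw [compatible_phiPiece_iff (hT hH).1 (hT hK).1]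

theorem loopFree_embedding_general (G : Pseudograph V E) (hG : G.ConnectedGraph) :
    (∀ 𝒯, G.IsTubing 𝒯 → (G.loopFree).IsTubing (G.phiPiece '' 𝒯)) ∧
    (∀ 𝒯 𝒯', G.IsTubing 𝒯 → G.IsTubing 𝒯' → G.phiPiece '' 𝒯 = G.phiPiece '' 𝒯' → 𝒯 = 𝒯') ∧
    (∀ 𝒯 𝒯', G.IsTubing 𝒯 → G.IsTubing 𝒯' → 𝒯 ⊆ 𝒯' → G.phiPiece '' 𝒯 ⊆ G.phiPiece '' 𝒯') ∧
    (∀ U, (G.loopFree).IsTubing U →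
      ((∃ 𝒯, G.IsTubing 𝒯 ∧ G.phiPiece '' 𝒯 = U) ↔ ∀ v, G.ghostPiece v ∉ U)) := by
  refine ⟨fun _ h => (isTubing_image_phiPiece_iff hG).2 h,
    fun _ _ _ _ h => phiPiece_injective.image_injective h, fun _ _ _ _ h => Set.image_mono h,
    fun U hU => ⟨?_, fun hnoGhost => ?_⟩⟩
  · rintro ⟨𝒯, h𝒯, rfl⟩ g ⟨H, hH, hHg⟩
    exact phiPiece_ne_ghostPiece (h𝒯.1 H hH).2.1.1 hHg
  · have himage : G.phiPiece '' (G.psiPiece '' U) = U := by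
      rw [Set.image_image]
      refine (Set.image_congr fun K hK => ?_).trans (Set.image_id U)
      exact phiPiece_psiPiece (hU.1 K hK) fun g hg => hnoGhost g (hg ▸ hK)
    exact ⟨_, (isTubing_image_phiPiece_iff hG).1 (by rwa [himage]), himage⟩

/-- `φ` is an injective poset map from tubings of `G` to tubings of `G_m`, whose image
consists exactly of the tubings of `G_m` containing no singleton ghost tube. -/
theorem loopFree_embedding (G : Pseudograph V E) (hG : G.ConnectedGraph)
    (hl : ∃ e v, G.ends e = s(v, v)) :
    (∀ 𝒯, G.IsTubing 𝒯 → (G.loopFree).IsTubing (G.phiPiece '' 𝒯)) ∧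
    (∀ 𝒯 𝒯', G.IsTubing 𝒯 → G.IsTubing 𝒯' → G.phiPiece '' 𝒯 = G.phiPiece '' 𝒯' → 𝒯 = 𝒯') ∧
    (∀ 𝒯 𝒯', G.IsTubing 𝒯 → G.IsTubing 𝒯' → 𝒯 ⊆ 𝒯' → G.phiPiece '' 𝒯 ⊆ G.phiPiece '' 𝒯') ∧
    (∀ U, (G.loopFree).IsTubing U →
      ((∃ 𝒯, G.IsTubing 𝒯 ∧ G.phiPiece '' 𝒯 = U) ↔ ∀ v, G.ghostPiece v ∉ U)) :=
  loopFree_embedding_general G hG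

end Pseudograph
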